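/- arXiv:1807.10461 — 3 statements merged into one kernel-verified Lean document; each statement's English description precedes it below -/
import Mathlib

section
/- The chromatic number of the k-th power of the infinite square grid equals ⌈(k+1)^2/2⌉ for every k ≥ 1. -/
/-- The infinite square grid. -/
def squareGrid : SimpleGraph (ℤ × ℤ) where
  Adj u v := (u.1 - v.1).natAbs + (u.2 - v.2).natAbs = 1
  symm := ⟨by intro u v h; omega⟩
  loopless := ⟨by intro u h; omega⟩

/-- The `k`-th power of a graph. -/
def graphPow {V : Type*} (G : SimpleGraph V) (k : ℕ) : SimpleGraph V where
  Adj u v := u ≠ v ∧ G.dist u v ≤ k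
  symm := by
    constructor
    intro u v h
    exact ⟨h.1.symm, by rw [SimpleGraph.dist_comm]; exact h.2⟩
  loopless := ⟨by intro u h; exact h.1 rfl⟩

/-!
The grid distance is the `ℓ¹` distance. The lower bound is a clique: the points `(i + j, i - j)`
with `0 ≤ i, j ≤ ⌊k/2⌋` together with the points `(i + j + 1, i - j)` with `0 ≤ i, j < ⌈k/2⌉`
lie pairwise at `ℓ¹`-distance at most `k`, and there are
`(⌊k/2⌋ + 1)² + ⌈k/2⌉² = ⌈(k+1)²/2⌉` of them. The upper bound is the lattice colouring
`(x, y) ↦ (2⌊k/2⌋ + 1) x + y mod ⌈(k+1)²/2⌉`, whose kernel contains no nonzero vector of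
`ℓ¹`-norm at most `k`.
-/

open SimpleGraph Finset

lemma hasse_int_adj {a b : ℤ} : (hasse ℤ).Adj a b ↔ (a - b).natAbs = 1 := by
  rw [hasse_adj, Order.covBy_iff_add_one_eq, Order.covBy_iff_add_one_eq]
  omega

lemma natAbs_sub_le_length {a b : ℤ} (w : (hasse ℤ).Walk a b) :
    (a - b).natAbs ≤ w.length := by
  induction w with
  | nil => simp
  | cons h _ ih =>
    rw [hasse_int_adj] at h
    rw [Walk.length_cons]
    omega

lemma edist_hasse_int_add_le (a : ℤ) (n : ℕ) : (hasse ℤ).edist a (a + n) ≤ n := by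
  induction n with
  | zero => simp
  | succ n ih =>
    calc (hasse ℤ).edist a (a + ↑(n + 1))
        ≤ (hasse ℤ).edist a (a + n) + (hasse ℤ).edist (a + n) (a + ↑(n + 1)) :=
          SimpleGraph.edist_triangle
      _ ≤ n + 1 := by
          gcongr
          exact (edist_eq_one_iff_adj.mpr (hasse_int_adj.mpr (by omega))).le

lemma edist_hasse_int (a b : ℤ) : (hasse ℤ).edist a b = (a - b).natAbs := by
  refine le_antisymm ?_ ?_
  · wlog hab : a ≤ b generalizing a b
    · rw [edist_comm, ← Int.natAbs_neg, neg_sub]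
      exact this b a (by omega)
    obtain ⟨n, rfl⟩ := Int.exists_add_of_le hab
    simpa using edist_hasse_int_add_le a n
  · obtain h | h := eq_or_ne ((hasse ℤ).edist a b) ⊤
    · simp [h]
    obtain ⟨w, hw⟩ := exists_walk_of_edist_ne_top h
    exact hw ▸ Nat.cast_le.mpr (natAbs_sub_le_length w)

lemma squareGrid_eq_boxProd : squareGrid = hasse ℤ □ hasse ℤ := by
  ext u v
  rw [boxProd_adj, hasse_int_adj, hasse_int_adj]
  show (u.1 - v.1).natAbs + (u.2 - v.2).natAbs = 1 ↔ _
  omega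

lemma squareGrid_dist (u v : ℤ × ℤ) :
    squareGrid.dist u v = (u.1 - v.1).natAbs + (u.2 - v.2).natAbs := by
  rw [SimpleGraph.dist, squareGrid_eq_boxProd, edist_boxProd, edist_hasse_int, edist_hasse_int,
    ← Nat.cast_add, ENat.toNat_natCast]

lemma graphPow_squareGrid_adj {k : ℕ} {u v : ℤ × ℤ} :
    (graphPow squareGrid k).Adj u v ↔
      u ≠ v ∧ (u.1 - v.1).natAbs + (u.2 - v.2).natAbs ≤ k := by
  rw [← squareGrid_dist]
  rfl

def tiltedSquare (n : ℕ) : Finset (ℤ × ℤ) :=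
  (range n ×ˢ range n).image fun ij => ((ij.1 + ij.2 : ℤ), (ij.1 - ij.2 : ℤ))

lemma mem_tiltedSquare {n : ℕ} {p : ℤ × ℤ} :
    p ∈ tiltedSquare n ↔ ∃ i < n, ∃ j < n, ((i : ℤ) + j, (i : ℤ) - j) = p := by
  simp [tiltedSquare, and_assoc]

lemma card_tiltedSquare (n : ℕ) : #(tiltedSquare n) = n ^ 2 := by
  rw [tiltedSquare, card_image_of_injective, card_product, card_range, sq]
  intro ⟨i, j⟩ ⟨i', j'⟩ h
  simp only [Prod.mk.injEq] at h ⊢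
  omega

def gridClique (k : ℕ) : Finset (ℤ × ℤ) :=
  tiltedSquare (k / 2 + 1) ∪ (tiltedSquare ((k + 1) / 2)).map (addRightEmbedding (1, 0))

lemma mem_gridClique {k : ℕ} {p : ℤ × ℤ} : p ∈ gridClique k ↔
    (∃ i < k / 2 + 1, ∃ j < k / 2 + 1, ((i : ℤ) + j, (i : ℤ) - j) = p) ∨
    (∃ i < (k + 1) / 2, ∃ j < (k + 1) / 2, ((i : ℤ) + j + 1, (i : ℤ) - j) = p) := by
  simp [gridClique, mem_tiltedSquare]

lemma sq_add_sq_div_two (k : ℕ) :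
    (k / 2 + 1) ^ 2 + ((k + 1) / 2) ^ 2 = ((k + 1) ^ 2 + 1) / 2 := by
  obtain ⟨r, rfl | rfl⟩ := Nat.even_or_odd' k
  · rw [show 2 * r / 2 = r by omega, show (2 * r + 1) / 2 = r by omega,
      show (2 * r + 1) ^ 2 + 1 = 2 * ((r + 1) ^ 2 + r ^ 2) by ring]
    omega
  · rw [show (2 * r + 1) / 2 = r by omega, show (2 * r + 1 + 1) / 2 = r + 1 by omega,
      show (2 * r + 1 + 1) ^ 2 + 1 = 2 * ((r + 1) ^ 2 + (r + 1) ^ 2) + 1 by ring]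
    omega

lemma card_gridClique (k : ℕ) : #(gridClique k) = ((k + 1) ^ 2 + 1) / 2 := by
  rw [gridClique, card_union_of_disjoint, card_map, card_tiltedSquare, card_tiltedSquare,
    sq_add_sq_div_two]
  refine disjoint_left.mpr fun p hp hp' => ?_
  obtain ⟨i, -, j, -, rfl⟩ := mem_tiltedSquare.mp hp
  obtain ⟨_, hq, h⟩ := mem_map.mp hp'
  obtain ⟨i', -, j', -, rfl⟩ := mem_tiltedSquare.mp hq
  simp only [addRightEmbedding_apply, Prod.mk_add_mk, Prod.mk.injEq] at h
  omega

lemma isClique_gridClique (k : ℕ) :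
    (graphPow squareGrid k).IsClique (gridClique k : Set (ℤ × ℤ)) := by
  intro p hp q hq hpq
  rw [mem_coe, mem_gridClique] at hp hq
  refine graphPow_squareGrid_adj.mpr ⟨hpq, ?_⟩
  obtain ⟨i, hi, j, hj, rfl⟩ | ⟨i, hi, j, hj, rfl⟩ := hp <;>
  obtain ⟨i', hi', j', hj', rfl⟩ | ⟨i', hi', j', hj', rfl⟩ := hq <;>
  · dsimp only
    omega

-- In the next two lemmas `k = 2 * s + d`, so that `(s + 1) ^ 2 + (s + d) ^ 2 = ⌈(k+1)²/2⌉`.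

lemma lt_abs_add_abs_of_mul_add_eq {s d x y : ℤ} (hs : 0 ≤ s) (hd : d = 0 ∨ d = 1)
    (h : (2 * s + 1) * x + y = (s + 1) ^ 2 + (s + d) ^ 2) : 2 * s + d < |x| + |y| := by
  have := le_abs_self x
  have := le_abs_self y
  have := neg_abs_le x
  have := neg_abs_le y
  -- With `N` the right-hand side: `x + y = N - 2 s x > 2 s + d` when `x ≤ s + d`,
  -- and `x - y = (2 s + 2) x - N > 2 s + d` when `x > s + d`.
  rcases le_or_gt x (s + d) with hx | hx
  · rcases le_or_gt x 0 with hx₀ | hx₀ <;> rcases hd with rfl | rfl <;> nlinarith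
  · rcases hd with rfl | rfl <;> nlinarith

lemma eq_zero_of_mul_add_eq_mul {s d x y t : ℤ} (hs : 0 ≤ s) (hd : d = 0 ∨ d = 1)
    (h : (2 * s + 1) * x + y = t * ((s + 1) ^ 2 + (s + d) ^ 2)) (hxy : |x| + |y| ≤ 2 * s + d) :
    x = 0 ∧ y = 0 := by
  have hN : 0 < (s + 1) ^ 2 + (s + d) ^ 2 := by positivity
  have ht : |t| ≤ 1 := by
    by_contra! ht
    have hlower : 2 * ((s + 1) ^ 2 + (s + d) ^ 2) ≤ |(2 * s + 1) * x + y| := by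
      rw [h, abs_mul, abs_of_pos hN]
      nlinarith
    have hupper : |(2 * s + 1) * x + y| ≤ (2 * s + 1) * (2 * s + d) :=
      calc |(2 * s + 1) * x + y| ≤ |(2 * s + 1) * x| + |y| := abs_add_le _ _
        _ = (2 * s + 1) * |x| + |y| := by rw [abs_mul, abs_of_nonneg (by omega)]
        _ ≤ _ := by nlinarith [abs_nonneg x, abs_nonneg y]
    rcases hd with rfl | rfl <;> nlinarith
  obtain ⟨ht₁, ht₂⟩ := abs_le.mp ht
  interval_cases t
  · have := lt_abs_add_abs_of_mul_add_eq (x := -x) (y := -y) hs hd (by linarith)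
    rw [abs_neg, abs_neg] at this
    omega
  · have hy : |y| = (2 * s + 1) * |x| := by
      rw [show y = -((2 * s + 1) * x) by linarith, abs_neg, abs_mul, abs_of_nonneg (by omega)]
    have hx : |x| = 0 := by rcases hd with rfl | rfl <;> nlinarith [abs_nonneg x]
    simp_all
  · have := lt_abs_add_abs_of_mul_add_eq (x := x) (y := y) hs hd (by linarith)
    omega

lemma eq_zero_of_dvd_of_natAbs_add_natAbs_le {k : ℕ} {x y : ℤ}
    (hdvd : ((((k + 1) ^ 2 + 1) / 2 : ℕ) : ℤ) ∣ (2 * (k / 2 : ℕ) + 1) * x + y)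
    (hle : x.natAbs + y.natAbs ≤ k) : x = 0 ∧ y = 0 := by
  obtain ⟨t, ht⟩ := hdvd
  rw [← sq_add_sq_div_two, show (k + 1) / 2 = k / 2 + k % 2 by omega] at ht
  have hk : k = 2 * (k / 2) + k % 2 := (Nat.div_add_mod k 2).symm
  have hd : k % 2 = 0 ∨ k % 2 = 1 := Nat.mod_two_eq_zero_or_one k
  generalize k / 2 = s at ht hk
  generalize k % 2 = d at ht hk hd
  subst hk
  push_cast at ht
  refine eq_zero_of_mul_add_eq_mul (s := s) (d := d) (t := t) (by positivity) (by omega)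
    (by linarith) ?_
  rw [Int.abs_eq_natAbs, Int.abs_eq_natAbs]
  omega

lemma colorable_graphPow_squareGrid (k : ℕ) :
    (graphPow squareGrid k).Colorable (((k + 1) ^ 2 + 1) / 2) := by
  have : NeZero (((k + 1) ^ 2 + 1) / 2) := ⟨by rw [← sq_add_sq_div_two]; positivity⟩
  let color (p : ℤ × ℤ) : ZMod (((k + 1) ^ 2 + 1) / 2) :=
    (((2 * (k / 2 : ℕ) + 1) * p.1 + p.2 : ℤ) : ZMod _)
  have hproper : ∀ {u v}, (graphPow squareGrid k).Adj u v → color u ≠ color v := by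
    intro u v huv hcolor
    rw [graphPow_squareGrid_adj] at huv
    rw [ZMod.intCast_eq_intCast_iff_dvd_sub] at hcolor
    have hzero := eq_zero_of_dvd_of_natAbs_add_natAbs_le (x := v.1 - u.1) (y := v.2 - u.2)
      (by convert hcolor using 1; ring) (by omega)
    exact huv.1 (Prod.ext (by omega) (by omega))
  simpa using (Coloring.mk color hproper).colorable

theorem chromaticNumber_squareGrid_pow_general (k : ℕ) :
    (graphPow squareGrid k).chromaticNumber = ((((k + 1) ^ 2 + 1) / 2 : ℕ) : ℕ∞) := by
  refine le_antisymm (colorable_graphPow_squareGrid k).chromaticNumber_le ?_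
  rw [← card_gridClique]
  exact (isClique_gridClique k).card_le_chromaticNumber

/-- The chromatic number of the `k`-th power of the square grid is
`⌈(k+1)^2 / 2⌉` (Fertin, Godard, Raspaud). -/
theorem chromaticNumber_squareGrid_pow (k : ℕ) (hk : 1 ≤ k) :
    (graphPow squareGrid k).chromaticNumber = ((((k + 1) ^ 2 + 1) / 2 : ℕ) : ℕ∞) :=
  chromaticNumber_squareGrid_pow_general k
end

section
/- Let G be one of the infinite square, triangular, or king grids, and let S ⊆ V(G) be a finite set such that G[S] is connected and hole-free. If p ∈ S is S-contractible, then G[S \ {p}] is connected and hole-free. -/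
/-- The infinite triangular grid. -/
def triGrid : SimpleGraph (ℤ × ℤ) where
  Adj u v := (u.1 - v.1).natAbs + (u.2 - v.2).natAbs = 1 ∨
    (u.1 - v.1 = 1 ∧ u.2 - v.2 = -1) ∨ (u.1 - v.1 = -1 ∧ u.2 - v.2 = 1)
  symm := ⟨by intro u v h; omega⟩
  loopless := ⟨by intro u h; omega⟩

/-- The infinite king grid. -/
def kingGrid : SimpleGraph (ℤ × ℤ) where
  Adj u v := max (u.1 - v.1).natAbs (u.2 - v.2).natAbs = 1
  symm := ⟨by intro u v h; omega⟩
  loopless := ⟨by intro u h; omega⟩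

/-- One of the three infinite grids: square, triangular or king. -/
inductive GridKind | square | tri | king

/-- The graph of a grid kind. -/
def GridKind.graph : GridKind → SimpleGraph (ℤ × ℤ)
  | .square => squareGrid
  | .tri => triGrid
  | .king => kingGrid

/-- The four diagonal corners of a vertex of the square grid. -/
def corners (p : ℤ × ℤ) : Set (ℤ × ℤ) :=
  {(p.1 + 1, p.2 + 1), (p.1 + 1, p.2 - 1), (p.1 - 1, p.2 + 1), (p.1 - 1, p.2 - 1)}

/-- The extended neighborhood `M_G(p)`: the neighborhood for the triangular and
king grids, and the neighborhood together with the four corners for the square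
grid. -/
def GridKind.M (g : GridKind) (p : ℤ × ℤ) : Set (ℤ × ℤ) :=
  match g with
  | .square => squareGrid.neighborSet p ∪ corners p
  | _ => g.graph.neighborSet p

/-- A hole of `S` in `G`: a finite nonempty connected set of vertices disjoint
from `S`, all of whose neighbors lie in the hole or in `S`. -/
def IsHole (G : SimpleGraph (ℤ × ℤ)) (S H : Set (ℤ × ℤ)) : Prop :=
  H.Finite ∧ H.Nonempty ∧ (G.induce H).Preconnected ∧ Disjoint H S ∧
    ∀ u ∈ H, ∀ v, G.Adj u v → v ∈ H ∪ S

/-- `S` is hole-free in `G` if it has no hole. -/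
def HoleFree (G : SimpleGraph (ℤ × ℤ)) (S : Set (ℤ × ℤ)) : Prop :=
  ∀ H, ¬ IsHole G S H

/-- A vertex `p ∈ S` is `S`-contractible if `G[M_G(p) ∩ S]` is connected and
some neighbor of `p` lies outside `S` (i.e. `|N_G(p) ∩ S| < Δ(G)`). -/
def Contractible (g : GridKind) (S : Set (ℤ × ℤ)) (p : ℤ × ℤ) : Prop :=
  (g.graph.induce (g.M p ∩ S)).Preconnected ∧ ∃ v, g.graph.Adj p v ∧ v ∉ S

/-! A walk in `G[S]` between two vertices other than `p` can only pass through `p` between two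
neighbours of `p`, and these are joined inside `G[M_G(p) ∩ S]`, so connectivity survives the
removal. A hole of `S \ {p}` that avoids `p` is a hole of `S`; one that contains `p` also
contains the neighbour of `p` outside `S`, and its component in `H \ {p}` is a hole of `S`. -/

open SimpleGraph

variable {V : Type*} {G : SimpleGraph V}

theorem SimpleGraph.Reachable.induce_mono {s t : Set V} (hst : s ⊆ t) {u v : s}
    (h : (G.induce s).Reachable u v) :
    (G.induce t).Reachable (Set.inclusion hst u) (Set.inclusion hst v) :=
  h.map (G.induceHomOfLE hst).toHom

-- When the walk starts at `p`, any neighbour `x` of `p` in `S` may stand in for its start.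
theorem SimpleGraph.Walk.reachable_induce_diff_singleton {S N : Set V} {p : V}
    (hNS : N ⊆ S \ {p}) (hN : ∀ x ∈ S, G.Adj p x → x ∈ N) (hNconn : (G.induce N).Preconnected)
    {a b : S} (w : (G.induce S).Walk a b) (hb : b.1 ≠ p) {x : V} (hx : x ∈ S \ {p})
    (hxa : x = a ∨ (a.1 = p ∧ G.Adj p x)) :
    (G.induce (S \ {p})).Reachable ⟨x, hx⟩ ⟨b, b.2, hb⟩ := by
  induction w generalizing x with
  | nil =>
    obtain rfl | ⟨ha, -⟩ := hxa
    · rfl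
    · exact absurd ha hb
  | @cons a c b hac w ih =>
    have hac : G.Adj a c := hac
    by_cases hc : c.1 = p
    · obtain rfl | ⟨ha, -⟩ := hxa
      · exact ih hb hx (Or.inr ⟨hc, hc ▸ hac.symm⟩)
      · exact (G.irrefl (ha.trans hc.symm ▸ hac)).elim
    · have hxc : (G.induce (S \ {p})).Reachable ⟨x, hx⟩ ⟨c, c.2, hc⟩ := by
        obtain rfl | ⟨ha, hpx⟩ := hxa
        · exact Adj.reachable hac
        · have hxN := hN x hx.1 hpx
          have hcN := hN c c.2 (ha ▸ hac)
          exact (hNconn ⟨x, hxN⟩ ⟨c, hcN⟩).induce_mono hNS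
      exact hxc.trans (ih hb ⟨c.2, hc⟩ (Or.inl rfl))

theorem SimpleGraph.Preconnected.induce_diff_singleton {S N : Set V} {p : V}
    (hS : (G.induce S).Preconnected) (hNS : N ⊆ S \ {p}) (hN : ∀ x ∈ S, G.Adj p x → x ∈ N)
    (hNconn : (G.induce N).Preconnected) : (G.induce (S \ {p})).Preconnected := by
  rintro ⟨x, hx⟩ ⟨y, hy⟩
  obtain ⟨w⟩ := hS ⟨x, hx.1⟩ ⟨y, hy.1⟩
  exact w.reachable_induce_diff_singleton hNS hN hNconn hy.2 hx (Or.inl rfl)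

theorem exists_isHole_of_closed {G : SimpleGraph (ℤ × ℤ)} {S H : Set (ℤ × ℤ)} {u₀ : ℤ × ℤ}
    (hfin : H.Finite) (hu₀ : u₀ ∈ H) (hdisj : Disjoint H S)
    (hcl : ∀ u ∈ H, ∀ v, G.Adj u v → v ∈ H ∪ S) : ∃ C, IsHole G S C := by
  set C := {v | ∃ w : G.Walk u₀ v, ∀ x ∈ w.support, x ∈ H}
  have hCH : C ⊆ H := fun v ⟨w, hw⟩ => hw v w.end_mem_support
  have hu₀C : u₀ ∈ C := ⟨.nil, by simpa using hu₀⟩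
  have hsupp {v : ℤ × ℤ} (w : G.Walk u₀ v) (hw : ∀ x ∈ w.support, x ∈ H) :
      {x | x ∈ w.support} ⊆ C := by
    exact fun x hx =>
      ⟨w.takeUntil x hx, fun y hy => hw y (w.support_takeUntil_subset_support hx hy)⟩
  have hCconn : (G.induce C).Connected :=
    induce_connected_of_patches u₀ hu₀C fun {v} ⟨w, hw⟩ =>
      ⟨_, hsupp w hw, w.start_mem_support, w.end_mem_support,
        (w.connected_induce_support).preconnected _ _⟩
  refine ⟨C, hfin.subset hCH, ⟨u₀, hu₀C⟩, hCconn.preconnected, hdisj.mono_left hCH, ?_⟩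
  rintro u ⟨w, hw⟩ v huv
  refine (hcl u (hCH ⟨w, hw⟩) v huv).imp_left fun hv => ⟨w.concat huv, fun x hx => ?_⟩
  rw [Walk.support_concat, List.mem_append, List.mem_singleton] at hx
  exact hx.elim (hw x) (· ▸ hv)

theorem HoleFree.diff_singleton {G : SimpleGraph (ℤ × ℤ)} {S : Set (ℤ × ℤ)} {p v : ℤ × ℤ}
    (hS : HoleFree G S) (hp : p ∈ S) (hpv : G.Adj p v) (hv : v ∉ S) :
    HoleFree G (S \ {p}) := by
  rintro H ⟨hfin, hne, hconn, hdisj, hcl⟩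
  by_cases hpH : p ∈ H
  · have hvH : v ∈ H := (hcl p hpH v hpv).resolve_right fun h => hv h.1
    have hdisj' : Disjoint (H \ {p}) S :=
      Set.disjoint_left.2 fun x hx hxS => Set.disjoint_left.1 hdisj hx.1 ⟨hxS, hx.2⟩
    have hcl' : ∀ u ∈ H \ {p}, ∀ w, G.Adj u w → w ∈ H \ {p} ∪ S := by
      rintro u hu w huw
      by_cases hw : w = p
      · exact .inr (hw ▸ hp)
      · exact (hcl u hu.1 w huw).imp (⟨·, hw⟩) (·.1)
    obtain ⟨C, hC⟩ :=
      exists_isHole_of_closed hfin.sdiff ⟨hvH, (G.ne_of_adj hpv).symm⟩ hdisj' hcl'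
    exact hS C hC
  · refine hS H ⟨hfin, hne, hconn, ?_, fun u hu w huw => (hcl u hu w huw).imp_right (·.1)⟩
    exact Set.disjoint_left.2 fun x hx hxS =>
      Set.disjoint_left.1 hdisj hx ⟨hxS, fun h => hpH (h ▸ hx)⟩

theorem GridKind.notMem_M_self (g : GridKind) (p : ℤ × ℤ) : p ∉ g.M p := by
  cases g with
  | square =>
    rintro (h | h)
    · exact squareGrid.irrefl h
    · simp only [corners, Set.mem_insert_iff, Set.mem_singleton_iff, Prod.ext_iff] at h
      omega
  | tri => exact triGrid.irrefl
  | king => exact kingGrid.irrefl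

theorem GridKind.neighborSet_subset_M (g : GridKind) (p : ℤ × ℤ) :
    g.graph.neighborSet p ⊆ g.M p := by
  cases g with
  | square => exact Set.subset_union_left
  | tri | king => exact subset_rfl

theorem contractible_remove_connected_holeFree_general (g : GridKind) (S : Set (ℤ × ℤ))
    (hconn : (g.graph.induce S).Connected)
    (hhf : HoleFree g.graph S) (p : ℤ × ℤ) (hp : p ∈ S)
    (hc : Contractible g S p) :
    (g.graph.induce (S \ {p})).Preconnected ∧ HoleFree g.graph (S \ {p}) := by
  obtain ⟨hMconn, v, hpv, hv⟩ := hc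
  have hMS : g.M p ∩ S ⊆ S \ {p} := fun x hx =>
    ⟨hx.2, fun h => g.notMem_M_self p (h ▸ hx.1)⟩
  have hNM : ∀ x ∈ S, g.graph.Adj p x → x ∈ g.M p ∩ S := fun x hx hpx =>
    ⟨g.neighborSet_subset_M p hpx, hx⟩
  exact ⟨hconn.preconnected.induce_diff_singleton hMS hNM hMconn, hhf.diff_singleton hp hpv hv⟩

/-- Removing an `S`-contractible vertex from a finite connected hole-free set
keeps the induced subgraph connected and hole-free. -/
theorem contractible_remove_connected_holeFree (g : GridKind) (S : Set (ℤ × ℤ))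
    (hfin : S.Finite) (hconn : (g.graph.induce S).Connected)
    (hhf : HoleFree g.graph S) (p : ℤ × ℤ) (hp : p ∈ S)
    (hc : Contractible g S p) :
    (g.graph.induce (S \ {p})).Preconnected ∧ HoleFree g.graph (S \ {p}) :=
  contractible_remove_connected_holeFree_general g S hconn hhf p hp hc
end

section
/- In the triangular grid with vertex set Z×Z, for a vertex p, the induced subgraph on N(p) ∩ S is connected if and only if the set of port labels {a ∈ {0,...,5} : the neighbor of p in direction a is in S} is a (possibly empty or full) cyclic interval of Z/6Z. -/
/-- The offsets of the six neighbors of a vertex of the triangular grid, listed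
in clockwise order as ports `0, …, 5`. -/
def triDir : Fin 6 → ℤ × ℤ :=
  ![(-1, 0), (-1, 1), (0, 1), (1, 0), (1, -1), (0, -1)]

open Fin.NatCast in
/-- A set of port labels is a cyclic interval of `ℤ/6ℤ` (possibly empty or
full) if it consists of consecutive residues modulo 6. -/
def IsCyclicInterval (A : Set (Fin 6)) : Prop :=
  ∃ (s : Fin 6) (l : ℕ), l ≤ 6 ∧ A = {a | ∃ t : ℕ, t < l ∧ a = s + (t : Fin 6)}

/-!
The map `a ↦ p + triDir a` embeds the 6-cycle `0 — 1 — ⋯ — 5 — 0` of ports into the triangular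
grid with image exactly the neighbour set of `p`: consecutive ports point to adjacent vertices,
and no others do. So the subgraph induced on `N(p) ∩ S` is isomorphic to the subgraph of the
6-cycle induced on the ports leading into `S`, and it remains to see that a vertex set of the
6-cycle induces a connected subgraph iff it is a cyclic interval, which is checked on all 64
subsets.
-/

open SimpleGraph

noncomputable def SimpleGraph.Embedding.induceIsoImage {V W : Type*} {G : SimpleGraph V}
    {G' : SimpleGraph W} (f : G ↪g G') (s : Set V) : G.induce s ≃g G'.induce (f '' s) where
  toEquiv := Equiv.Set.image f s f.injective
  map_rel_iff' := by simp

open Fin.NatCast in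
lemma isCyclicInterval_coe_iff (A : Finset (Fin 6)) :
    IsCyclicInterval (A : Set (Fin 6)) ↔
      ∃ s : Fin 6, ∃ l ∈ Finset.range 7,
        A = (Finset.range l).image fun t : ℕ => s + (t : Fin 6) := by
  simp only [IsCyclicInterval, Finset.mem_range, Nat.lt_succ_iff, ← Finset.coe_inj,
    Finset.coe_image, Finset.coe_range]
  simp [Set.image, eq_comm]

set_option maxRecDepth 4000 in
lemma cycleGraph_six_induce_preconnected_iff (A : Set (Fin 6)) :
    ((cycleGraph 6).induce A).Preconnected ↔ IsCyclicInterval A := by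
  obtain ⟨A, rfl⟩ := A.toFinite.exists_finset_coe
  rw [isCyclicInterval_coe_iff]
  revert A
  decide

lemma triGrid_adj_iff_exists_triDir {p v : ℤ × ℤ} :
    triGrid.Adj p v ↔ ∃ a, p + triDir a = v := by
  obtain ⟨d, rfl⟩ : ∃ d, v = p + d := ⟨v - p, by abel⟩
  simp only [triGrid, triDir, Prod.fst_add, Prod.snd_add, sub_add_cancel_left, Int.natAbs_neg,
    neg_inj, add_right_inj, Prod.ext_iff, Fin.exists_fin_succ, Matrix.cons_val_zero,
    Matrix.cons_val_succ, Matrix.cons_val_fin_one, exists_const]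
  omega

lemma triGrid_adj_add_triDir_iff (p : ℤ × ℤ) (a b : Fin 6) :
    triGrid.Adj (p + triDir a) (p + triDir b) ↔ (cycleGraph 6).Adj a b := by
  simp only [triGrid, Prod.fst_add, Prod.snd_add, add_sub_add_left_eq_sub, cycleGraph_adj]
  revert a b
  decide

lemma triDir_injective : Function.Injective triDir := by
  decide

def triDirEmbedding (p : ℤ × ℤ) : cycleGraph 6 ↪g triGrid where
  toFun a := p + triDir a
  inj' := (add_right_injective p).comp triDir_injective
  map_rel_iff' := triGrid_adj_add_triDir_iff p _ _

lemma range_triDirEmbedding (p : ℤ × ℤ) :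
    Set.range (triDirEmbedding p) = triGrid.neighborSet p := by
  ext v
  simp [triDirEmbedding, triGrid_adj_iff_exists_triDir]

lemma neighborSet_inter_eq_image_triDirEmbedding (p : ℤ × ℤ) (S : Set (ℤ × ℤ)) :
    triGrid.neighborSet p ∩ S = triDirEmbedding p '' {a | p + triDir a ∈ S} := by
  rw [← range_triDirEmbedding, ← Set.image_preimage_eq_range_inter]
  rfl

/-- For a vertex `p` of the triangular grid and a set `S` of vertices, the
subgraph induced on `N(p) ∩ S` is connected iff the set of ports of `p` leading
into `S` is a cyclic interval of `ℤ/6ℤ`. -/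
theorem triGrid_neighborhood_connected_iff_cyclic_interval
    (p : ℤ × ℤ) (S : Set (ℤ × ℤ)) :
    (triGrid.induce (triGrid.neighborSet p ∩ S)).Preconnected ↔
      IsCyclicInterval {a : Fin 6 | p + triDir a ∈ S} := by
  rw [neighborSet_inter_eq_image_triDirEmbedding,
    ← ((triDirEmbedding p).induceIsoImage _).preconnected_iff]
  exact cycleGraph_six_induce_preconnected_iff _
end
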